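/- Let A|B be a depth two ring extension with centralizer R = C_A(B) and S = End_{B-B}(A). Then the map Δ: S → S ⊗_R S defined via the left depth two quasibasis by Δ(α) = Σ_i α(? · t_i^1) t_i^2 ⊗_R β_i satisfies, under the canonical isomorphism S ⊗_R S ≅ Hom_{B-B}(A ⊗_B A, A), the identity Δ(α)(a ⊗ a') = α(a a') for all a, a' in A. -/

import Mathlib

open TensorProduct

noncomputable section

namespace D2

variable (A : Type*) [Ring A] (B : Subring A)

/-- The defining relations of `A ⊗_B A` as a quotient of `A ⊗_ℤ A`. -/
def relSub : Submodule ℤ (A ⊗[ℤ] A) :=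
  Submodule.span ℤ {x | ∃ (a c : A) (b : B), x = (a * (b : A)) ⊗ₜ[ℤ] c - a ⊗ₜ[ℤ] ((b : A) * c)}

/-- The tensor square `A ⊗_B A` of a ring extension `B ⊆ A`. -/
abbrev TensorSq := (A ⊗[ℤ] A) ⧸ relSub A B

/-- The class of a simple tensor `a ⊗_B c`. -/
def tmulB (a c : A) : TensorSq A B := Submodule.Quotient.mk (a ⊗ₜ[ℤ] c)

/-- Left multiplication `a₀ • (x ⊗ y) = (a₀ x) ⊗ y` on `A ⊗_B A`. -/
def lmul (a : A) : TensorSq A B →ₗ[ℤ] TensorSq A B :=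
  Submodule.mapQ _ _ (TensorProduct.map (LinearMap.mulLeft ℤ a) LinearMap.id) (by
    rw [relSub, Submodule.span_le]
    rintro x ⟨a', c, b, rfl⟩
    simp only [SetLike.mem_coe, Submodule.mem_comap, map_sub, TensorProduct.map_tmul,
      LinearMap.mulLeft_apply, LinearMap.id_apply]
    refine Submodule.subset_span ⟨a * a', c, b, ?_⟩
    erw [map_sub, TensorProduct.map_tmul, TensorProduct.map_tmul]
    simp [mul_assoc])

/-- Right multiplication `(x ⊗ y) • a₀ = x ⊗ (y a₀)` on `A ⊗_B A`. -/
def rmul (a : A) : TensorSq A B →ₗ[ℤ] TensorSq A B :=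
  Submodule.mapQ _ _ (TensorProduct.map LinearMap.id (LinearMap.mulRight ℤ a)) (by
    rw [relSub, Submodule.span_le]
    rintro x ⟨a', c, b, rfl⟩
    simp only [SetLike.mem_coe, Submodule.mem_comap, map_sub, TensorProduct.map_tmul,
      LinearMap.mulRight_apply, LinearMap.id_apply]
    refine Submodule.subset_span ⟨a', c * a, b, ?_⟩
    erw [map_sub, TensorProduct.map_tmul, TensorProduct.map_tmul]
    simp [mul_assoc])

/-- The multiplication map `A ⊗_B A → A`, `x ⊗ y ↦ x y`. -/
def mulQ : TensorSq A B →ₗ[ℤ] A :=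
  Submodule.liftQ _ (LinearMap.mul' ℤ A) (by
    rw [relSub, Submodule.span_le]
    rintro x ⟨a, c, b, rfl⟩
    simp only [SetLike.mem_coe]
    erw [LinearMap.mem_ker, map_sub, LinearMap.mul'_apply, LinearMap.mul'_apply]
    simp [mul_assoc])

/-- An element `t` of `A ⊗_B A` is `B`-central when `b t = t b` for all `b ∈ B`. -/
def IsBCentral (t : TensorSq A B) : Prop := ∀ b ∈ B, lmul A B b t = rmul A B b t

/-- An element `t` of `A ⊗_B A` is `A`-central (a Casimir element) when `a t = t a`. -/
def IsACentral (t : TensorSq A B) : Prop := ∀ a : A, lmul A B a t = rmul A B a t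

/-- A `B`-`B`-bimodule endomorphism of `A`. -/
def IsBB (α : A →ₗ[ℤ] A) : Prop :=
  ∀ b ∈ B, ∀ a : A, α ((b : A) * a) = b * α a ∧ α (a * b) = α a * b

/-- A right `B`-module endomorphism of `A`. -/
def IsRightB (f : A →ₗ[ℤ] A) : Prop := ∀ a : A, ∀ b ∈ B, f (a * b) = f a * b

/-- `x ↦ (x·) ⊗ id` as a linear map, used to build Sweedler-type expressions. -/
def lmulTen : A →ₗ[ℤ] (A ⊗[ℤ] A) →ₗ[ℤ] (A ⊗[ℤ] A) where
  toFun a := TensorProduct.map (LinearMap.mulLeft ℤ a) LinearMap.id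
  map_add' a a' := by
    apply TensorProduct.ext'
    intro x y
    erw [LinearMap.add_apply, TensorProduct.map_tmul, TensorProduct.map_tmul]
    simp [add_mul, TensorProduct.add_tmul]
  map_smul' z a := by
    apply TensorProduct.ext'
    intro x y
    simp only [TensorProduct.map_tmul, LinearMap.mulLeft_apply, LinearMap.id_apply,
      LinearMap.smul_apply, RingHom.id_apply, smul_mul_assoc, TensorProduct.smul_tmul']
    erw [LinearMap.smul_apply, TensorProduct.map_tmul]
    simp [smul_mul_assoc, TensorProduct.smul_tmul']

/-- For `ζ = Σ u ⊗ v`, the map `a ↦ Σ α(a u) v`, i.e. `α(? ζ¹) ζ²`. -/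
def sweed (α : A →ₗ[ℤ] A) (ζ : A ⊗[ℤ] A) : A →ₗ[ℤ] A :=
  ((LinearMap.mul' ℤ A).comp (TensorProduct.map α LinearMap.id)).comp ((lmulTen A).flip ζ)

/-- For `ζ = Σ u ⊗ v`, the element `Σ u r v` ("sandwich" evaluation `ζ¹ r ζ²`). -/
def sandw (r : A) (ζ : A ⊗[ℤ] A) : A :=
  (LinearMap.mul' ℤ A) ((TensorProduct.map (LinearMap.mulRight ℤ r) LinearMap.id) ζ)

/-- `mul₂ ζ ξ = Σ (u x) ⊗ (y v)` for `ζ = Σ u ⊗ v`, `ξ = Σ x ⊗ y`: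
the product `ξ ·_T ζ` of two elements of `T = (A ⊗_B A)^B` on representatives. -/
def mul₂ : (A ⊗[ℤ] A) →ₗ[ℤ] (A ⊗[ℤ] A) →ₗ[ℤ] (A ⊗[ℤ] A) :=
  TensorProduct.lift <| LinearMap.mk₂ ℤ
    (fun u v => TensorProduct.map (LinearMap.mulLeft ℤ u) (LinearMap.mulRight ℤ v))
    (fun u u' v => by
      apply TensorProduct.ext'
      intro x y
      erw [LinearMap.add_apply, TensorProduct.map_tmul, TensorProduct.map_tmul]
      simp [add_mul, TensorProduct.add_tmul])
    (fun z u v => by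
      apply TensorProduct.ext'
      intro x y
      simp only [TensorProduct.map_tmul, LinearMap.mulLeft_apply, LinearMap.mulRight_apply,
        LinearMap.smul_apply, smul_mul_assoc, TensorProduct.smul_tmul']
      erw [LinearMap.smul_apply, TensorProduct.map_tmul]
      simp [smul_mul_assoc, TensorProduct.smul_tmul'])
    (fun u v v' => by
      apply TensorProduct.ext'
      intro x y
      erw [LinearMap.add_apply, TensorProduct.map_tmul, TensorProduct.map_tmul]
      simp [mul_add, TensorProduct.tmul_add])
    (fun z u v => by
      apply TensorProduct.ext'
      intro x y
      simp only [TensorProduct.map_tmul, LinearMap.mulLeft_apply, LinearMap.mulRight_apply,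
        LinearMap.smul_apply, mul_smul_comm, TensorProduct.tmul_smul]
      erw [LinearMap.smul_apply, TensorProduct.map_tmul]
      simp [mul_smul_comm, TensorProduct.tmul_smul, TensorProduct.smul_tmul'])

/-- `A` is balanced as a right `B`-module. -/
def RightBalanced : Prop :=
  ∀ φ : A →+ A,
    (∀ f : A →+ A, (∀ a : A, ∀ b ∈ B, f (a * b) = f a * b) → ∀ a, φ (f a) = f (φ a)) →
    ∃ b ∈ B, ∀ a, φ a = a * b

end D2

end


open TensorProduct in
/-- the coproduct `Δ(α) = Σᵢ α(? tᵢ¹) tᵢ² ⊗_R βᵢ` on `S = End_{B-B}(A)`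
satisfies `Δ(α)(a ⊗ a') = α(a a')` under the canonical identification
`S ⊗_R S ≅ Hom_{B-B}(A ⊗_B A, A)`. -/
theorem stmt2 {A : Type*} [Ring A] (B : Subring A)
    (m : ℕ) (t : Fin m → A ⊗[ℤ] A) (β : Fin m → (A →ₗ[ℤ] A))
    (hc : ∀ i, D2.IsBCentral A B (Submodule.Quotient.mk (t i)))
    (hβ : ∀ i, D2.IsBB A B (β i))
    (hqb : ∀ a a' : A, D2.tmulB A B a a' =
      ∑ i, D2.rmul A B (β i a * a') (Submodule.Quotient.mk (t i))) :
    ∀ α : A →ₗ[ℤ] A, D2.IsBB A B α →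
      ∀ a a' : A, ∑ i, (D2.sweed A α (t i)) a * (β i a') = α (a * a') := by
  intro α hα a a'
  -- the well-defined map `x ⊗_B y ↦ α(x) y`
  have hwd : D2.relSub A B ≤
      LinearMap.ker ((LinearMap.mul' ℤ A).comp (TensorProduct.map α LinearMap.id)) := by
    rw [D2.relSub]
    erw [Submodule.span_le]
    rintro x ⟨u, v, b, rfl⟩
    show (LinearMap.mul' ℤ A) (TensorProduct.map α LinearMap.id
      ((u * (b : A)) ⊗ₜ[ℤ] v - u ⊗ₜ[ℤ] ((b : A) * v))) = 0
    simp only [SetLike.mem_coe, LinearMap.mem_ker, map_sub, LinearMap.comp_apply,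
      TensorProduct.map_tmul, LinearMap.id_apply, LinearMap.mul'_apply]
    rw [(hα b b.2 u).2, mul_assoc, sub_self]
  set G : D2.TensorSq A B →ₗ[ℤ] A :=
    Submodule.liftQ _ ((LinearMap.mul' ℤ A).comp (TensorProduct.map α LinearMap.id)) hwd
    with hG
  have key : ∀ (c : A) (ζ : A ⊗[ℤ] A),
      G (D2.lmul A B a (D2.rmul A B c (Submodule.Quotient.mk ζ))) = D2.sweed A α ζ a * c := by
    intro c ζ
    induction ζ using TensorProduct.induction_on with
    | zero =>
        simp [D2.sweed]
        erw [LinearMap.comp_zero, LinearMap.zero_apply, zero_mul]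
    | tmul u v =>
        erw [hG, D2.rmul, D2.lmul, Submodule.mapQ_apply]
        show (LinearMap.mul' ℤ A) (TensorProduct.map α LinearMap.id
          (TensorProduct.map (LinearMap.mulLeft ℤ a) LinearMap.id
            (TensorProduct.map LinearMap.id (LinearMap.mulRight ℤ c) (u ⊗ₜ[ℤ] v)))) =
          (LinearMap.mul' ℤ A) (TensorProduct.map α LinearMap.id
            (TensorProduct.map (LinearMap.mulLeft ℤ a) LinearMap.id (u ⊗ₜ[ℤ] v))) * c
        simp [D2.sweed, D2.lmulTen, mul_assoc]
    | add x y hx hy =>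
        have : (Submodule.Quotient.mk (x + y) : D2.TensorSq A B) =
            Submodule.Quotient.mk x + Submodule.Quotient.mk y := rfl
        rw [this, map_add, map_add, map_add, hx, hy, D2.sweed, D2.sweed, D2.sweed]
        simp only [LinearMap.comp_apply, map_add, LinearMap.add_apply, add_mul]
        erw [LinearMap.comp_add, LinearMap.add_apply, add_mul]
  have h2 : D2.tmulB A B (a * a') 1 = D2.lmul A B a (D2.tmulB A B a' 1) := by
    erw [D2.tmulB, D2.tmulB, D2.lmul, Submodule.mapQ_apply, TensorProduct.map_tmul]
    rfl
  have h1 : G (D2.tmulB A B (a * a') 1) = α (a * a') := by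
    erw [hG, D2.tmulB]
    show (LinearMap.mul' ℤ A) (TensorProduct.map α LinearMap.id ((a * a') ⊗ₜ[ℤ] 1)) = _
    simp
  calc ∑ i, (D2.sweed A α (t i)) a * (β i a')
      = ∑ i, G (D2.lmul A B a (D2.rmul A B (β i a' * 1) (Submodule.Quotient.mk (t i)))) := by
        simp [key]
    _ = G (D2.lmul A B a (∑ i, D2.rmul A B (β i a' * 1) (Submodule.Quotient.mk (t i)))) := by
        rw [map_sum, map_sum]
    _ = G (D2.lmul A B a (D2.tmulB A B a' 1)) := by rw [← hqb a' 1]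
    _ = α (a * a') := by rw [← h2, h1]
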